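/- Under the hypotheses of the integrated flux balance — namely, Dᵢⱼ : [−1,1] × ℝ → ℝ C¹ and 1-periodic in y₂, g : ℝ → ℝ C¹, u, F : [−1,1] × ℝ × ℝ → ℝ (C² and continuous, respectively) 1-periodic in y₂, satisfying the membrane equation ∂u/∂T − [∂/∂z₁(D₁₁ ∂u/∂z₁) + ∂/∂y₂(D₂₂ ∂u/∂y₂) + ∂/∂z₁(D₁₂ ∂u/∂y₂) + ∂/∂y₂(D₂₁ ∂u/∂z₁)] − ∂/∂z₁(D₁₁ g(u)) − ∂/∂y₂(D₂₁ g(u)) = F for all (z₁, y₂, T) — assume in addition that the external normal fluxes J⁻, J⁺ : ℝ × ℝ → ℝ satisfy the transmission conditions J⁻(y₂, T) = [D₁₁ ∂u/∂z₁ + D₁₂ ∂u/∂y₂ + D₁₁ g(u)](−1, y₂, T) and J⁺(y₂, T) = −[D₁₁ ∂u/∂z₁ + D₁₂ ∂u/∂y₂ + D₁₁ g(u)](1, y₂, T). Then for every T the jump condition holds: ∫₀¹ (J⁺(y₂,T) + J⁻(y₂,T)) dy₂ = ∫₀¹∫₋₁¹ (F − ∂u/∂T) dz₁ dy₂; that is,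 the total normal flux entering the membrane through its two vertical interfaces equals the source integrated over the membrane cell minus the rate of accumulation inside it. -/

import Mathlib

/-- The internal membrane flux `D₁₁ ∂u/∂z₁ + D₁₂ ∂u/∂y₂ + D₁₁ g(u)`. -/
noncomputable def membraneFlux (D₁₁ D₁₂ : ℝ → ℝ → ℝ) (g : ℝ → ℝ)
    (u : ℝ → ℝ → ℝ → ℝ) (z₁ y₂ T : ℝ) : ℝ :=
  D₁₁ z₁ y₂ * deriv (fun r => u r y₂ T) z₁
    + D₁₂ z₁ y₂ * deriv (fun r => u z₁ r T) y₂
    + D₁₁ z₁ y₂ * g (u z₁ y₂ T)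

/-!
In divergence form the membrane equation reads `F - ∂u/∂T = -(∂_{z₁} Φ₁ + ∂_{y₂} Φ₂)`, with
horizontal flux `Φ₁ = membraneFlux` and vertical flux
`Φ₂ = D₂₂ ∂u/∂y₂ + D₂₁ ∂u/∂z₁ + D₂₁ g(u)`.
Integrating over the cell `[-1, 1] × [0, 1]` (divergence theorem), the vertical flux contributes
nothing because it is `1`-periodic in `y₂`, and the horizontal flux leaves its boundary values
`Φ₁(1, ·) = -J⁺` and `Φ₁(-1, ·) = J⁻`.
-/

open Function Set MeasureTheory

section Calculus

variable {E : Type*} [NormedAddCommGroup E] [NormedSpace ℝ E] {φ : ℝ → ℝ → E}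

theorem DifferentiableAt.hasDerivAt_uncurry_fst {x y : ℝ}
    (h : DifferentiableAt ℝ (uncurry φ) (x, y)) :
    HasDerivAt (fun s => φ s y) (fderiv ℝ (uncurry φ) (x, y) (1, 0)) x :=
  HasFDerivAt.comp_hasDerivAt (l := uncurry φ) x h.hasFDerivAt
    ((hasDerivAt_id' x).prodMk (hasDerivAt_const x y))

theorem DifferentiableAt.hasDerivAt_uncurry_snd {x y : ℝ}
    (h : DifferentiableAt ℝ (uncurry φ) (x, y)) :
    HasDerivAt (φ x) (fderiv ℝ (uncurry φ) (x, y) (0, 1)) y :=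
  HasFDerivAt.comp_hasDerivAt (l := uncurry φ) y h.hasFDerivAt
    ((hasDerivAt_const y x).prodMk (hasDerivAt_id' y))

theorem Differentiable.uncurry_left (x : ℝ) (h : Differentiable ℝ (uncurry φ)) :
    Differentiable ℝ (φ x) :=
  fun y => (h (x, y)).hasDerivAt_uncurry_snd.differentiableAt

theorem Differentiable.uncurry_right (y : ℝ) (h : Differentiable ℝ (uncurry φ)) :
    Differentiable ℝ fun x => φ x y :=
  fun x => (h (x, y)).hasDerivAt_uncurry_fst.differentiableAt

theorem ContDiff.uncurry_deriv_fst {m n : WithTop ℕ∞} (h : ContDiff ℝ n (uncurry φ))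
    (hmn : m + 1 ≤ n) : ContDiff ℝ m (uncurry fun x y => deriv (fun s => φ s y) x) := by
  have hφ : Differentiable ℝ (uncurry φ) :=
    (h.of_le (le_add_self.trans hmn)).differentiable one_ne_zero
  convert (h.fderiv_right hmn).clm_apply contDiff_const with p
  exact (hφ p).hasDerivAt_uncurry_fst.deriv

theorem ContDiff.uncurry_deriv_snd {m n : WithTop ℕ∞} (h : ContDiff ℝ n (uncurry φ))
    (hmn : m + 1 ≤ n) : ContDiff ℝ m (uncurry fun x y => deriv (φ x) y) := by
  have hφ : Differentiable ℝ (uncurry φ) :=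
    (h.of_le (le_add_self.trans hmn)).differentiable one_ne_zero
  convert (h.fderiv_right hmn).clm_apply contDiff_const with p
  exact (hφ p).hasDerivAt_uncurry_snd.deriv

theorem Function.Periodic.deriv {f : ℝ → E} {c : ℝ} (h : Periodic f c) :
    Periodic (deriv f) c := by
  intro x
  rw [← deriv_comp_add_const, funext h]

theorem integral_integral_deriv_add_deriv_of_periodic [CompleteSpace E] {P Q : ℝ → ℝ → E}
    (hP : ContDiff ℝ 1 (uncurry P)) (hQ : ContDiff ℝ 1 (uncurry Q)) {c : ℝ}
    (hQ_per : ∀ x, Periodic (Q x) c) (a b : ℝ) :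
    ∫ y in (0:ℝ)..c, ∫ x in a..b, (deriv (fun s => P s y) x + deriv (Q x) y)
      = ∫ y in (0:ℝ)..c, (P b y - P a y) := by
  -- In the coordinates `(y, x)` the divergence theorem yields the iterated integral in this order.
  set f : ℝ × ℝ → E := uncurry fun y x => Q x y
  set g : ℝ × ℝ → E := uncurry fun y x => P x y
  have hf : ContDiff ℝ 1 f := hQ.comp (contDiff_snd.prodMk contDiff_fst)
  have hg : ContDiff ℝ 1 g := hP.comp (contDiff_snd.prodMk contDiff_fst)
  have hdiv : ∀ y x, deriv (fun s => P s y) x + deriv (Q x) y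
      = fderiv ℝ f (y, x) (1, 0) + fderiv ℝ g (y, x) (0, 1) := fun y x => by
    rw [add_comm, (hf.differentiable one_ne_zero (y, x)).hasDerivAt_uncurry_fst.deriv,
      (hg.differentiable one_ne_zero (y, x)).hasDerivAt_uncurry_snd.deriv]
  have hcont : Continuous fun p => fderiv ℝ f p (1, 0) + fderiv ℝ g p (0, 1) :=
    ((hf.continuous_fderiv one_ne_zero).clm_apply continuous_const).add
      ((hg.continuous_fderiv one_ne_zero).clm_apply continuous_const)
  have hQ_c : ∀ x, Q x c = Q x 0 := fun x => by simpa using hQ_per x 0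
  simp only [hdiv]
  rw [integral2_divergence_prod_of_hasFDerivAt f g (fderiv ℝ f) (fderiv ℝ g) 0 a c b
    hf.continuous.continuousOn hg.continuous.continuousOn
    (fun p _ => (hf.differentiable one_ne_zero p).hasFDerivAt)
    (fun p _ => (hg.differentiable one_ne_zero p).hasFDerivAt)
    (hcont.continuousOn.integrableOn_compact (isCompact_uIcc.prod isCompact_uIcc)),
    intervalIntegral.integral_sub ((hP.continuous.uncurry_left b).intervalIntegrable _ _)
      ((hP.continuous.uncurry_left a).intervalIntegrable _ _)]
  simp [f, g, hQ_c]

end Calculus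

noncomputable def verticalFlux (D₂₁ D₂₂ : ℝ → ℝ → ℝ) (g : ℝ → ℝ)
    (u : ℝ → ℝ → ℝ → ℝ) (z₁ y₂ T : ℝ) : ℝ :=
  D₂₂ z₁ y₂ * deriv (fun r => u z₁ r T) y₂
    + D₂₁ z₁ y₂ * deriv (fun r => u r y₂ T) z₁
    + D₂₁ z₁ y₂ * g (u z₁ y₂ T)

section Fluxes

variable {D₁₁ D₁₂ D₂₁ D₂₂ : ℝ → ℝ → ℝ} {g : ℝ → ℝ} {u : ℝ → ℝ → ℝ → ℝ} {T : ℝ}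

theorem contDiff_membraneFlux (hD₁₁ : ContDiff ℝ 1 (uncurry D₁₁))
    (hD₁₂ : ContDiff ℝ 1 (uncurry D₁₂)) (hg : ContDiff ℝ 1 g)
    (hu : ContDiff ℝ 2 (uncurry fun z y => u z y T)) :
    ContDiff ℝ 1 (uncurry fun z y => membraneFlux D₁₁ D₁₂ g u z y T) :=
  ((hD₁₁.mul (hu.uncurry_deriv_fst (by norm_num))).add
    (hD₁₂.mul (hu.uncurry_deriv_snd (by norm_num)))).add
    (hD₁₁.mul (hg.comp (hu.of_le one_le_two)))

theorem contDiff_verticalFlux (hD₂₁ : ContDiff ℝ 1 (uncurry D₂₁))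
    (hD₂₂ : ContDiff ℝ 1 (uncurry D₂₂)) (hg : ContDiff ℝ 1 g)
    (hu : ContDiff ℝ 2 (uncurry fun z y => u z y T)) :
    ContDiff ℝ 1 (uncurry fun z y => verticalFlux D₂₁ D₂₂ g u z y T) :=
  ((hD₂₂.mul (hu.uncurry_deriv_snd (by norm_num))).add
    (hD₂₁.mul (hu.uncurry_deriv_fst (by norm_num)))).add
    (hD₂₁.mul (hg.comp (hu.of_le one_le_two)))

theorem verticalFlux_periodic (hD₂₁ : ∀ z, Periodic (D₂₁ z) 1)
    (hD₂₂ : ∀ z, Periodic (D₂₂ z) 1)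
    (hu : ∀ z T, Periodic (fun y => u z y T) 1) (z : ℝ) :
    Periodic (fun y => verticalFlux D₂₁ D₂₂ g u z y T) 1 := by
  intro y
  have hu_shift : (fun r => u r (y + 1) T) = fun r => u r y T := funext fun r => hu r T y
  simp only [verticalFlux, hD₂₁ z y, hD₂₂ z y, hu z T y, (hu z T).deriv y, hu_shift]

theorem deriv_membraneFlux_add_deriv_verticalFlux (hD₁₁ : ContDiff ℝ 1 (uncurry D₁₁))
    (hD₁₂ : ContDiff ℝ 1 (uncurry D₁₂)) (hD₂₁ : ContDiff ℝ 1 (uncurry D₂₁))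
    (hD₂₂ : ContDiff ℝ 1 (uncurry D₂₂)) (hg : ContDiff ℝ 1 g)
    (hu : ContDiff ℝ 2 (uncurry fun z y => u z y T)) (z y : ℝ) :
    deriv (fun s => membraneFlux D₁₁ D₁₂ g u s y T) z
        + deriv (fun s => verticalFlux D₂₁ D₂₂ g u z s T) y
      = deriv (fun s => D₁₁ s y * deriv (fun r => u r y T) s) z
          + deriv (fun s => D₂₂ z s * deriv (fun r => u z r T) s) y
          + deriv (fun s => D₁₂ s y * deriv (fun r => u s r T) y) z
          + deriv (fun s => D₂₁ z s * deriv (fun r => u r s T) z) y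
        + deriv (fun s => D₁₁ s y * g (u s y T)) z
        + deriv (fun s => D₂₁ z s * g (u z s T)) y := by
  have d₁ := (hu.uncurry_deriv_fst (m := 1) (by norm_num)).differentiable one_ne_zero
  have d₂ := (hu.uncurry_deriv_snd (m := 1) (by norm_num)).differentiable one_ne_zero
  have dg : Differentiable ℝ (uncurry fun z y => g (u z y T)) :=
    (hg.comp (hu.of_le one_le_two)).differentiable one_ne_zero
  have dD₁₁ := hD₁₁.differentiable one_ne_zero
  have dD₁₂ := hD₁₂.differentiable one_ne_zero
  have dD₂₁ := hD₂₁.differentiable one_ne_zero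
  have dD₂₂ := hD₂₂.differentiable one_ne_zero
  have hz : deriv (fun s => membraneFlux D₁₁ D₁₂ g u s y T) z
      = deriv (fun s => D₁₁ s y * deriv (fun r => u r y T) s) z
        + deriv (fun s => D₁₂ s y * deriv (fun r => u s r T) y) z
        + deriv (fun s => D₁₁ s y * g (u s y T)) z :=
    (((((dD₁₁.uncurry_right y).mul (d₁.uncurry_right y)) z).hasDerivAt.add
      (((dD₁₂.uncurry_right y).mul (d₂.uncurry_right y)) z).hasDerivAt).add
      (((dD₁₁.uncurry_right y).mul (dg.uncurry_right y)) z).hasDerivAt).deriv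
  have hy : deriv (fun s => verticalFlux D₂₁ D₂₂ g u z s T) y
      = deriv (fun s => D₂₂ z s * deriv (fun r => u z r T) s) y
        + deriv (fun s => D₂₁ z s * deriv (fun r => u r s T) z) y
        + deriv (fun s => D₂₁ z s * g (u z s T)) y :=
    (((((dD₂₂.uncurry_left z).mul (d₂.uncurry_left z)) y).hasDerivAt.add
      (((dD₂₁.uncurry_left z).mul (d₁.uncurry_left z)) y).hasDerivAt).add
      (((dD₂₁.uncurry_left z).mul (dg.uncurry_left z)) y).hasDerivAt).deriv
  rw [hz, hy]
  abel

end Fluxes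

theorem membrane_jump_condition_general
    (D₁₁ D₁₂ D₂₁ D₂₂ : ℝ → ℝ → ℝ)
    (hD₁₁ : ContDiff ℝ 1 fun p : ℝ × ℝ => D₁₁ p.1 p.2)
    (hD₁₂ : ContDiff ℝ 1 fun p : ℝ × ℝ => D₁₂ p.1 p.2)
    (hD₂₁ : ContDiff ℝ 1 fun p : ℝ × ℝ => D₂₁ p.1 p.2)
    (hD₂₂ : ContDiff ℝ 1 fun p : ℝ × ℝ => D₂₂ p.1 p.2)
    (hD₂₁_per : ∀ z₁ : ℝ, Function.Periodic (fun y => D₂₁ z₁ y) 1)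
    (hD₂₂_per : ∀ z₁ : ℝ, Function.Periodic (fun y => D₂₂ z₁ y) 1)
    (g : ℝ → ℝ) (hg : ContDiff ℝ 1 g)
    (u : ℝ → ℝ → ℝ → ℝ)
    (hu : ContDiff ℝ 2 fun p : ℝ × ℝ × ℝ => u p.1 p.2.1 p.2.2)
    (hu_per : ∀ z₁ T : ℝ, Function.Periodic (fun y => u z₁ y T) 1)
    (F : ℝ → ℝ → ℝ → ℝ)
    -- the membrane equation on [−1,1] × ℝ × ℝ
    (hpde : ∀ z₁ ∈ Set.Icc (-1:ℝ) 1, ∀ y₂ T : ℝ,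
      deriv (fun s => u z₁ y₂ s) T
        - (deriv (fun s => D₁₁ s y₂ * deriv (fun r => u r y₂ T) s) z₁
            + deriv (fun s => D₂₂ z₁ s * deriv (fun r => u z₁ r T) s) y₂
            + deriv (fun s => D₁₂ s y₂ * deriv (fun r => u s r T) y₂) z₁
            + deriv (fun s => D₂₁ z₁ s * deriv (fun r => u r s T) z₁) y₂)
        - deriv (fun s => D₁₁ s y₂ * g (u s y₂ T)) z₁
        - deriv (fun s => D₂₁ z₁ s * g (u z₁ s T)) y₂
      = F z₁ y₂ T)
    -- the transmission conditions for the external normal fluxes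
    (Jminus Jplus : ℝ → ℝ → ℝ)
    (hJminus : ∀ y₂ T : ℝ, Jminus y₂ T = membraneFlux D₁₁ D₁₂ g u (-1) y₂ T)
    (hJplus : ∀ y₂ T : ℝ, Jplus y₂ T = - membraneFlux D₁₁ D₁₂ g u 1 y₂ T) :
    ∀ T : ℝ,
      (∫ y in (0:ℝ)..1, (Jplus y T + Jminus y T))
      = ∫ y in (0:ℝ)..1, ∫ z in (-1:ℝ)..1,
          (F z y T - deriv (fun s => u z y s) T) := by
  intro T
  have huT : ContDiff ℝ 2 (uncurry fun z y => u z y T) :=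
    hu.comp (contDiff_fst.prodMk (contDiff_snd.prodMk contDiff_const))
  have hbalance := integral_integral_deriv_add_deriv_of_periodic
    (contDiff_membraneFlux hD₁₁ hD₁₂ hg huT) (contDiff_verticalFlux hD₂₁ hD₂₂ hg huT)
    (verticalFlux_periodic hD₂₁_per hD₂₂_per hu_per) (-1) 1
  calc (∫ y in (0:ℝ)..1, (Jplus y T + Jminus y T))
      = -∫ y in (0:ℝ)..1,
          (membraneFlux D₁₁ D₁₂ g u 1 y T - membraneFlux D₁₁ D₁₂ g u (-1) y T) := by
        simp only [hJplus, hJminus, ← intervalIntegral.integral_neg, neg_sub, neg_add_eq_sub]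
    _ = ∫ y in (0:ℝ)..1, ∫ z in (-1:ℝ)..1, (F z y T - deriv (fun s => u z y s) T) := by
        rw [← hbalance, ← intervalIntegral.integral_neg]
        refine intervalIntegral.integral_congr fun y _ => ?_
        rw [← intervalIntegral.integral_neg]
        refine intervalIntegral.integral_congr fun z hz => ?_
        have hz' : z ∈ Icc (-1:ℝ) 1 := by rwa [uIcc_of_le (by norm_num)] at hz
        rw [← hpde z hz' y T,
          deriv_membraneFlux_add_deriv_verticalFlux hD₁₁ hD₁₂ hD₂₁ hD₂₂ hg huT]
        ring

/-- Jump condition across the infinitely-thin membrane. Under the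
hypotheses of the integrated flux balance, if the external normal fluxes satisfy the
transmission conditions `J⁻(y₂,T) = flux(−1,y₂,T)` and `J⁺(y₂,T) = −flux(1,y₂,T)`,
then `∫₀¹ (J⁺ + J⁻) dy₂ = ∫₀¹∫₋₁¹ (F − ∂u/∂T) dz₁ dy₂`: the total normal flux
entering through the two vertical interfaces equals the integrated source minus the
rate of accumulation inside the membrane cell. -/
theorem membrane_jump_condition
    (D₁₁ D₁₂ D₂₁ D₂₂ : ℝ → ℝ → ℝ)
    (hD₁₁ : ContDiff ℝ 1 fun p : ℝ × ℝ => D₁₁ p.1 p.2)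
    (hD₁₂ : ContDiff ℝ 1 fun p : ℝ × ℝ => D₁₂ p.1 p.2)
    (hD₂₁ : ContDiff ℝ 1 fun p : ℝ × ℝ => D₂₁ p.1 p.2)
    (hD₂₂ : ContDiff ℝ 1 fun p : ℝ × ℝ => D₂₂ p.1 p.2)
    (hD₁₁_per : ∀ z₁ : ℝ, Function.Periodic (fun y => D₁₁ z₁ y) 1)
    (hD₁₂_per : ∀ z₁ : ℝ, Function.Periodic (fun y => D₁₂ z₁ y) 1)
    (hD₂₁_per : ∀ z₁ : ℝ, Function.Periodic (fun y => D₂₁ z₁ y) 1)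
    (hD₂₂_per : ∀ z₁ : ℝ, Function.Periodic (fun y => D₂₂ z₁ y) 1)
    (g : ℝ → ℝ) (hg : ContDiff ℝ 1 g)
    (u : ℝ → ℝ → ℝ → ℝ)
    (hu : ContDiff ℝ 2 fun p : ℝ × ℝ × ℝ => u p.1 p.2.1 p.2.2)
    (hu_per : ∀ z₁ T : ℝ, Function.Periodic (fun y => u z₁ y T) 1)
    (F : ℝ → ℝ → ℝ → ℝ)
    (hF : Continuous fun p : ℝ × ℝ × ℝ => F p.1 p.2.1 p.2.2)
    (hF_per : ∀ z₁ T : ℝ, Function.Periodic (fun y => F z₁ y T) 1)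
    -- the membrane equation on [−1,1] × ℝ × ℝ
    (hpde : ∀ z₁ ∈ Set.Icc (-1:ℝ) 1, ∀ y₂ T : ℝ,
      deriv (fun s => u z₁ y₂ s) T
        - (deriv (fun s => D₁₁ s y₂ * deriv (fun r => u r y₂ T) s) z₁
            + deriv (fun s => D₂₂ z₁ s * deriv (fun r => u z₁ r T) s) y₂
            + deriv (fun s => D₁₂ s y₂ * deriv (fun r => u s r T) y₂) z₁
            + deriv (fun s => D₂₁ z₁ s * deriv (fun r => u r s T) z₁) y₂)
        - deriv (fun s => D₁₁ s y₂ * g (u s y₂ T)) z₁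
        - deriv (fun s => D₂₁ z₁ s * g (u z₁ s T)) y₂
      = F z₁ y₂ T)
    -- the transmission conditions for the external normal fluxes
    (Jminus Jplus : ℝ → ℝ → ℝ)
    (hJminus : ∀ y₂ T : ℝ, Jminus y₂ T = membraneFlux D₁₁ D₁₂ g u (-1) y₂ T)
    (hJplus : ∀ y₂ T : ℝ, Jplus y₂ T = - membraneFlux D₁₁ D₁₂ g u 1 y₂ T) :
    ∀ T : ℝ,
      (∫ y in (0:ℝ)..1, (Jplus y T + Jminus y T))
      = ∫ y in (0:ℝ)..1, ∫ z in (-1:ℝ)..1,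
          (F z y T - deriv (fun s => u z y s) T) :=
  membrane_jump_condition_general D₁₁ D₁₂ D₂₁ D₂₂ hD₁₁ hD₁₂ hD₂₁ hD₂₂ hD₂₁_per hD₂₂_per g hg u hu
    hu_per F hpde Jminus Jplus hJminus hJplus
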